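/- Generating function identity: for a Ferrers board B = B(c_1,…,c_n), Σ_{k=0}^n T_{n-k}(B;q) x^k / Π_{i=0}^n (1 - x q^i) = Σ_{k=0}^∞ x^k Π_{i=1}^n [k + c_i - i + 1]_q, as an identity of formal power series in x over Q(q). -/

import Mathlib

open Finset
open scoped Classical

noncomputable section

variable {R : Type*} [CommRing R]

/-- The q-integer `[m]_q = 1 + q + ... + q^{m-1}`. -/
def qint (q : R) (m : ℕ) : R := ∑ i ∈ Finset.range m, q ^ i

/-- The q-factorial `[m]_q!`. -/
def qfact (q : R) (m : ℕ) : R := ∏ i ∈ Finset.range m, qint q (i + 1)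

/-- A Ferrers board inside the `n × n` grid, given by column heights `c`:
square `(i,j)` (0-based row `i`, column `j`) belongs to the board iff `i < c j`. -/
def IsFerrers (n : ℕ) (c : Fin n → ℕ) : Prop := Monotone c ∧ ∀ j, c j ≤ n

/-- The squares of the Ferrers board with column heights `c`. -/
def boardSq (n : ℕ) (c : Fin n → ℕ) : Finset (Fin n × Fin n) :=
  Finset.univ.filter fun s => (s.1 : ℕ) < c s.2

/-- A set of rooks is non-attacking when no two share a row or a column. -/
def NonAttacking {n : ℕ} (C : Finset (Fin n × Fin n)) : Prop :=
  ∀ r ∈ C, ∀ r' ∈ C, r ≠ r' → r.1 ≠ r'.1 ∧ r.2 ≠ r'.2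

/-- Placements of `k` non-attacking rooks on the Ferrers board. -/
def placements (n : ℕ) (c : Fin n → ℕ) (k : ℕ) : Finset (Finset (Fin n × Fin n)) :=
  Finset.univ.filter fun C => C.card = k ∧ C ⊆ boardSq n c ∧ NonAttacking C

/-- `inv(C,B)`: the number of squares of the board that do not contain a rook and
are not above (smaller row index, same column) nor to the right of (same row,
larger column index) any rook of `C`. -/
def rookInv (n : ℕ) (c : Fin n → ℕ) (C : Finset (Fin n × Fin n)) : ℕ :=
  ((boardSq n c).filter fun s => s ∉ C ∧ ∀ r ∈ C,
    ¬(r.2 = s.2 ∧ s.1 < r.1) ∧ ¬(r.1 = s.1 ∧ r.2 < s.2)).card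

/-- The Garsia–Remmel q-rook polynomial `R_k(B;q)`. -/
def qRook (q : R) (n : ℕ) (c : Fin n → ℕ) (k : ℕ) : R :=
  ∑ C ∈ placements n c k, q ^ rookInv n c C

/-- The polynomial (in `x`) `∑_{j=0}^n [j]_q! R_{n-j}(B;q) ∏_{i=j+1}^n (x - q^i)`. -/
def hitGen (q : R) (n : ℕ) (c : Fin n → ℕ) : Polynomial R :=
  ∑ j ∈ Finset.range (n + 1),
    Polynomial.C (qfact q j * qRook q n c (n - j)) *
      ∏ i ∈ Finset.Icc (j + 1) n, (Polynomial.X - Polynomial.C (q ^ i))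

/-- The Garsia–Remmel q-hit polynomial `T_k(B;q)`, defined by
`∑_{j=0}^n [j]_q! R_{n-j}(B;q) ∏_{i=j+1}^n (x - q^i) = ∑_k T_k(B;q) x^k`. -/
def qHit (q : R) (n : ℕ) (c : Fin n → ℕ) (k : ℕ) : R := (hitGen q n c).coeff k

/-- Placements of `n` non-attacking rooks on the full `n × n` grid with exactly
`k` rooks on the board. -/
def fullPlacements (n : ℕ) (c : Fin n → ℕ) (k : ℕ) : Finset (Finset (Fin n × Fin n)) :=
  Finset.univ.filter fun C => C.card = n ∧ NonAttacking C ∧ (C ∩ boardSq n c).card = k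

end

/-- `[m]_q` for `m : ℤ`, with the convention that it vanishes for `m ≤ 0`. -/
noncomputable def qbrkPos (q : ℚ) (m : ℤ) : ℚ :=
  if 0 < m then ∑ i ∈ Finset.range m.toNat, q ^ i else 0

/-!
Multiply both sides by `∏_{i=0}^n (1 - x q^i)`. The coefficients of the right-hand side factor
as in the Garsia–Remmel q-analogue of the Goldman–Joichi–White identity,
`∏_i [k + c_i - i]_q = ∑_j R_{n-j}(B;q) [k]_q [k-1]_q ⋯ [k-j+1]_q`,
which is proved by adding the columns of `B` one at a time: a placement of `m` rooks on the
first `t + 1` columns either avoids column `t`, whose `c_t - m` free cells then all count as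
inversions, or has its last rook in one of the `c_t - m` free rows of column `t`, and these
positions contribute `[c_t - m]_q`. Since
`(∑_k [k]_q ⋯ [k-j+1]_q x^k) ∏_{i=0}^j (1 - x q^i) = [j]_q! x^j`, the product becomes
`∑_j [j]_q! R_{n-j}(B;q) x^j ∏_{i=j+1}^n (1 - x q^i)`, the reversal of the polynomial that
defines the `T_k(B;q)`.
-/
namespace QHit

variable {R : Type*} [CommRing R] (q : R)

lemma qint_add (a b : ℕ) : qint q (a + b) = qint q a + q ^ a * qint q b := by
  simp [qint, sum_range_add, mul_sum, pow_add]

lemma qint_succ' (m : ℕ) : qint q (m + 1) = 1 + q * qint q m := by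
  rw [add_comm, qint_add]
  simp [qint]

lemma sum_pow_card_filter_lt {α : Type*} [LinearOrder α] (A : Finset α) :
    ∑ a ∈ A, q ^ #{b ∈ A | a < b} = qint q #A := by
  induction A using Finset.induction_on_max with
  | empty => simp [qint]
  | insert M A hlt ih =>
    have hM : M ∉ A := fun h => lt_irrefl _ (hlt M h)
    have hcard : ∀ a ∈ A, #{b ∈ insert M A | a < b} = #{b ∈ A | a < b} + 1 := fun a ha => by
      rw [filter_insert, if_pos (hlt a ha), card_insert_of_notMem (by simp [hM])]
    have htop : {b ∈ insert M A | M < b} = ∅ :=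
      filter_eq_empty_iff.2 fun b hb => not_lt.2 (by
        rcases mem_insert.1 hb with rfl | hb
        exacts [le_rfl, (hlt b hb).le])
    rw [sum_insert hM, htop, card_insert_of_notMem hM, qint_succ', ← ih, mul_sum, card_empty,
      pow_zero, sum_congr rfl fun a ha => by rw [hcard a ha, pow_succ']]

lemma qfact_succ (j : ℕ) : qfact q (j + 1) = qfact q j * qint q (j + 1) :=
  prod_range_succ _ _

def qDescFactorial (q : R) (k j : ℕ) : R := ∏ t ∈ range j, qint q (k - t)

@[simp] lemma qDescFactorial_zero (k : ℕ) : qDescFactorial q k 0 = 1 := by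
  simp [qDescFactorial]

lemma qDescFactorial_succ (k j : ℕ) :
    qDescFactorial q k (j + 1) = qDescFactorial q k j * qint q (k - j) :=
  prod_range_succ _ _

lemma qDescFactorial_of_lt {k j : ℕ} (h : k < j) : qDescFactorial q k j = 0 :=
  prod_eq_zero (mem_range.2 h) (by simp [qint])

lemma succ_qDescFactorial_succ (k j : ℕ) :
    qDescFactorial q (k + 1) (j + 1) = qint q (k + 1) * qDescFactorial q k j := by
  simp [qDescFactorial, prod_range_succ', mul_comm]

lemma qint_add_sub_mul_qDescFactorial {k d t m : ℕ} (hmt : m ≤ t) (hmd : m ≤ d) :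
    qint q (k + d - t) * qDescFactorial q k (t - m) =
      q ^ (d - m) * qDescFactorial q k (t + 1 - m) +
        qint q (d - m) * qDescFactorial q k (t - m) := by
  rw [show t + 1 - m = t - m + 1 by omega, qDescFactorial_succ]
  rcases lt_or_ge k (t - m) with hk | hk
  · simp [qDescFactorial_of_lt q hk]
  · rw [show k + d - t = (d - m) + (k - (t - m)) by omega, qint_add]
    ring

lemma coeff_mul_one_sub_C_mul_X (φ : PowerSeries R) (r : R) (m : ℕ) :
    PowerSeries.coeff (m + 1) (φ * (1 - PowerSeries.C r * PowerSeries.X)) =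
      PowerSeries.coeff (m + 1) φ - r * PowerSeries.coeff m φ := by
  rw [mul_sub, mul_one, mul_left_comm, map_sub, PowerSeries.coeff_C_mul,
    PowerSeries.coeff_succ_mul_X]

lemma mk_qDescFactorial_succ_mul_one_sub (j : ℕ) :
    PowerSeries.mk (qDescFactorial q · (j + 1)) *
        (1 - PowerSeries.C (q ^ (j + 1)) * PowerSeries.X) =
      PowerSeries.C (qint q (j + 1)) * PowerSeries.X * PowerSeries.mk (qDescFactorial q · j) := by
  ext (_ | m)
  · simp [qDescFactorial_of_lt q (Nat.succ_pos j)]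
  · rw [coeff_mul_one_sub_C_mul_X, mul_assoc, PowerSeries.coeff_C_mul,
      PowerSeries.coeff_succ_X_mul, PowerSeries.coeff_mk, PowerSeries.coeff_mk,
      PowerSeries.coeff_mk, succ_qDescFactorial_succ, qDescFactorial_succ]
    rcases lt_or_ge m j with hm | hm
    · simp [qDescFactorial_of_lt q hm]
    · have : qint q (m + 1) = qint q (j + 1) + q ^ (j + 1) * qint q (m - j) := by
        rw [← qint_add, show j + 1 + (m - j) = m + 1 by omega]
      rw [this]
      ring

lemma mk_qDescFactorial_mul_prod (j : ℕ) :
    PowerSeries.mk (qDescFactorial q · j) *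
        ∏ i ∈ range (j + 1), (1 - PowerSeries.C (q ^ i) * PowerSeries.X) =
      PowerSeries.C (qfact q j) * PowerSeries.X ^ j := by
  induction j with
  | zero =>
    ext (_ | m)
    · simp [qfact]
    · rw [prod_range_one, pow_zero, coeff_mul_one_sub_C_mul_X]
      simp
  | succ j ih =>
    rw [prod_range_succ, mul_comm (∏ i ∈ range (j + 1), _), ← mul_assoc,
      mk_qDescFactorial_succ_mul_one_sub, mul_assoc, ih, qfact_succ, map_mul]
    ring

section Reflect

open Polynomial

lemma sum_range_C_coeff_sub_mul_X_pow {P : R[X]} {n : ℕ} (h : P.natDegree ≤ n) :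
    ∑ k ∈ range (n + 1), C (P.coeff (n - k)) * X ^ k = P.reflect n := by
  ext m
  simp only [coeff_reflect, finsetSum_coeff, coeff_C_mul_X_pow, sum_ite_eq, mem_range]
  split_ifs with hm
  · rw [revAt_le (by omega)]
  · rw [revAt_eq_self_of_lt (by omega), coeff_eq_zero_of_natDegree_lt (by omega)]

lemma reflect_sum {ι : Type*} (s : Finset ι) (f : ι → R[X]) (N : ℕ) :
    (∑ i ∈ s, f i).reflect N = ∑ i ∈ s, (f i).reflect N := by
  classical
  induction s using Finset.induction with
  | empty => simp [reflect_zero]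
  | insert i s hi ih => rw [sum_insert hi, sum_insert hi, reflect_add, ih]

lemma natDegree_prod_X_sub_C_le {ι : Type*} (s : Finset ι) (a : ι → R) :
    (∏ i ∈ s, (X - C (a i))).natDegree ≤ #s :=
  (natDegree_prod_le _ _).trans
    ((sum_le_sum fun i _ => natDegree_X_sub_C_le (a i)).trans (by simp))

lemma reflect_prod_X_sub_C {ι : Type*} (s : Finset ι) (a : ι → R) :
    (∏ i ∈ s, (X - C (a i))).reflect #s = ∏ i ∈ s, (1 - C (a i) * X) := by
  classical
  induction s using Finset.induction with
  | empty => simp [reflect_one]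
  | insert i s hi ih =>
    rw [prod_insert hi, prod_insert hi, card_insert_of_notMem hi, add_comm,
      reflect_mul _ _ (natDegree_X_sub_C_le _) (natDegree_prod_X_sub_C_le s a), ih, reflect_sub,
      reflect_C, reflect_one_X, pow_one]

lemma reflect_hitGen (n : ℕ) (c : Fin n → ℕ) :
    (hitGen q n c).reflect n =
      ∑ j ∈ range (n + 1), C (qfact q j * qRook q n c (n - j)) *
        (X ^ j * ∏ i ∈ Icc (j + 1) n, (1 - C (q ^ i) * X)) := by
  rw [hitGen, reflect_sum]
  refine sum_congr rfl fun j hj => ?_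
  have hcard : #(Icc (j + 1) n) + j = n := by
    rw [Nat.card_Icc]; have := mem_range.1 hj; omega
  have := reflect_mul _ 1 (natDegree_prod_X_sub_C_le (Icc (j + 1) n) (q ^ ·))
    (natDegree_one.trans_le j.zero_le)
  rw [hcard, mul_one, reflect_prod_X_sub_C, reflect_one] at this
  rw [reflect_C_mul, this, mul_comm (X ^ j)]

lemma natDegree_hitGen_le (n : ℕ) (c : Fin n → ℕ) : (hitGen q n c).natDegree ≤ n := by
  refine natDegree_sum_le_of_forall_le _ _ fun j hj => (natDegree_C_mul_le _ _).trans ?_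
  refine (natDegree_prod_X_sub_C_le _ _).trans ?_
  rw [Nat.card_Icc]
  omega

lemma sum_C_qHit_mul_X_pow (n : ℕ) (c : Fin n → ℕ) :
    ∑ k ∈ range (n + 1), PowerSeries.C (qHit q n c (n - k)) * PowerSeries.X ^ k =
      ∑ j ∈ range (n + 1), PowerSeries.C (qfact q j * qRook q n c (n - j)) *
        (PowerSeries.X ^ j *
          ∏ i ∈ Icc (j + 1) n, (1 - PowerSeries.C (q ^ i) * PowerSeries.X)) := by
  have h := congrArg (coeToPowerSeries.ringHom (R := R))
    ((sum_range_C_coeff_sub_mul_X_pow (natDegree_hitGen_le q n c)).trans (reflect_hitGen q n c))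
  simpa only [qHit, map_sum, map_mul, map_pow, map_prod, map_sub, map_one,
    coeToPowerSeries.ringHom_apply, coe_C, coe_X] using h

end Reflect

section Rooks

variable {n : ℕ}

def colTrunc (c : Fin n → ℕ) (t : ℕ) (j : Fin n) : ℕ := if (j : ℕ) < t then c j else 0

lemma mem_boardSq {c : Fin n → ℕ} {s : Fin n × Fin n} :
    s ∈ boardSq n c ↔ (s.1 : ℕ) < c s.2 := by
  simp [boardSq]

lemma mem_boardSq_colTrunc {c : Fin n → ℕ} {t : ℕ} {s : Fin n × Fin n} :
    s ∈ boardSq n (colTrunc c t) ↔ (s.2 : ℕ) < t ∧ (s.1 : ℕ) < c s.2 := by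
  rw [mem_boardSq, colTrunc]
  split_ifs <;> simp_all

lemma colTrunc_of_le {c : Fin n → ℕ} {t : ℕ} (h : n ≤ t) : colTrunc c t = c :=
  funext fun j => if_pos (j.2.trans_le h)

lemma mem_placements {c : Fin n → ℕ} {k : ℕ} {C : Finset (Fin n × Fin n)} :
    C ∈ placements n c k ↔ #C = k ∧ C ⊆ boardSq n c ∧ NonAttacking C := by
  simp [placements]

lemma placements_zero (c : Fin n → ℕ) : placements n c 0 = {∅} := by
  ext C
  simp only [mem_placements, card_eq_zero, mem_singleton]
  refine ⟨And.left, ?_⟩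
  rintro rfl
  exact ⟨rfl, empty_subset _, fun r hr => absurd hr (notMem_empty r)⟩

lemma qRook_zero (c : Fin n → ℕ) : qRook q n c 0 = q ^ #(boardSq n c) := by
  simp [qRook, placements_zero, rookInv]

lemma _root_.NonAttacking.mono {C D : Finset (Fin n × Fin n)} (h : NonAttacking C)
    (hDC : D ⊆ C) : NonAttacking D :=
  fun r hr r' hr' hne => h r (hDC hr) r' (hDC hr') hne

lemma _root_.NonAttacking.insert {C : Finset (Fin n × Fin n)} {x : Fin n × Fin n}
    (h : NonAttacking C) (hx : ∀ r ∈ C, x.1 ≠ r.1 ∧ x.2 ≠ r.2) :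
    NonAttacking (insert x C) := by
  intro r hr r' hr' hne
  rcases mem_insert.1 hr with rfl | hrC <;> rcases mem_insert.1 hr' with rfl | hrC'
  · exact absurd rfl hne
  · exact hx r' hrC'
  · exact (hx r hrC).imp Ne.symm Ne.symm
  · exact h r hrC r' hrC' hne

lemma _root_.NonAttacking.card_image_fst {C : Finset (Fin n × Fin n)} (h : NonAttacking C) :
    #(C.image Prod.fst) = #C :=
  card_image_of_injOn fun r hr r' hr' he => by_contra fun hne => (h r hr r' hr' hne).1 he

lemma _root_.NonAttacking.card_image_snd {C : Finset (Fin n × Fin n)} (h : NonAttacking C) :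
    #(C.image Prod.snd) = #C :=
  card_image_of_injOn fun r hr r' hr' he => by_contra fun hne => (h r hr r' hr' hne).2 he

lemma card_le_of_forall_val_lt {s : Finset (Fin n)} {b : ℕ} (h : ∀ i ∈ s, (i : ℕ) < b) :
    #s ≤ b :=
  calc #s ≤ #{i : Fin n | (i : ℕ) < b} := card_le_card fun i hi => by simpa using h i hi
    _ = min n b := Fin.card_filter_val_lt
    _ ≤ b := min_le_right _ _

variable {c : Fin n → ℕ}

lemma col_lt_of_mem_placements_colTrunc {t m : ℕ} {C : Finset (Fin n × Fin n)}
    (hC : C ∈ placements n (colTrunc c t) m) {r : Fin n × Fin n} (hr : r ∈ C) :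
    (r.2 : ℕ) < t :=
  (mem_boardSq_colTrunc.1 ((mem_placements.1 hC).2.1 hr)).1

lemma row_lt_of_mem_placements_colTrunc (hc : Monotone c) {T : Fin n} {m : ℕ}
    {C : Finset (Fin n × Fin n)} (hC : C ∈ placements n (colTrunc c T) m) {r : Fin n × Fin n}
    (hr : r ∈ C) : (r.1 : ℕ) < c T := by
  have hrow := (mem_boardSq_colTrunc.1 ((mem_placements.1 hC).2.1 hr)).2
  exact hrow.trans_le (hc (Fin.le_iff_val_le_val.2 (col_lt_of_mem_placements_colTrunc hC hr).le))

lemma qRook_colTrunc_eq_zero_of_lt {t m : ℕ} (h : t < m) : qRook q n (colTrunc c t) m = 0 := by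
  refine sum_eq_zero fun C hC => absurd h (not_lt.2 ?_)
  obtain ⟨rfl, -, hna⟩ := mem_placements.1 hC
  rw [← hna.card_image_snd]
  refine card_le_of_forall_val_lt fun j hj => ?_
  obtain ⟨r, hr, rfl⟩ := mem_image.1 hj
  exact col_lt_of_mem_placements_colTrunc hC hr

lemma qRook_colTrunc_eq_zero_of_height_lt (hc : Monotone c) {T : Fin n} {m : ℕ} (h : c T < m) :
    qRook q n (colTrunc c T) m = 0 := by
  refine sum_eq_zero fun C hC => absurd h (not_lt.2 ?_)
  obtain ⟨hcard, -, hna⟩ := mem_placements.1 hC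
  rw [← hcard, ← hna.card_image_fst]
  refine card_le_of_forall_val_lt fun b hb => ?_
  obtain ⟨r, hr, rfl⟩ := mem_image.1 hb
  exact row_lt_of_mem_placements_colTrunc hc hC hr

def freeRows (h : ℕ) (C : Finset (Fin n × Fin n)) : Finset (Fin n) :=
  ({b : Fin n | (b : ℕ) < h} : Finset (Fin n)) \ C.image Prod.fst

lemma mem_freeRows {h : ℕ} {C : Finset (Fin n × Fin n)} {b : Fin n} :
    b ∈ freeRows h C ↔ (b : ℕ) < h ∧ ∀ r ∈ C, r.1 ≠ b := by
  simp only [freeRows, mem_sdiff, mem_filter, mem_univ, true_and, mem_image, not_exists, not_and]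

lemma card_freeRows (hc : Monotone c) (hcn : ∀ j, c j ≤ n) {T : Fin n} {m : ℕ}
    {C : Finset (Fin n × Fin n)} (hC : C ∈ placements n (colTrunc c T) m) :
    #(freeRows (c T) C) = c T - m := by
  have hrows : C.image Prod.fst ⊆ ({b : Fin n | (b : ℕ) < c T} : Finset (Fin n)) :=
    fun b hb => by
      obtain ⟨r, hr, rfl⟩ := mem_image.1 hb
      simpa using row_lt_of_mem_placements_colTrunc hc hC hr
  obtain ⟨hcard, -, hna⟩ := mem_placements.1 hC
  rw [freeRows, card_sdiff_of_subset hrows, Fin.card_filter_val_lt, hna.card_image_fst, hcard,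
    min_eq_right (hcn T)]

lemma card_filter_boardSq_colTrunc_succ (T : Fin n) (P : Fin n × Fin n → Prop)
    [DecidablePred P] :
    #{s ∈ boardSq n (colTrunc c (T + 1)) | P s} =
      #{s ∈ boardSq n (colTrunc c T) | P s} + #{b : Fin n | (b : ℕ) < c T ∧ P (b, T)} := by
  have hsplit : {s ∈ boardSq n (colTrunc c (T + 1)) | P s} =
      {s ∈ boardSq n (colTrunc c T) | P s} ∪
        ({b : Fin n | (b : ℕ) < c T ∧ P (b, T)} : Finset (Fin n)).map
          (Function.Embedding.sectL _ T) := by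
    ext ⟨b, j⟩
    rcases eq_or_ne j T with rfl | hj
    · simp [mem_boardSq_colTrunc]
    · simp [mem_boardSq_colTrunc, hj.symm, hj.le_iff_lt]
  rw [hsplit, card_union_of_disjoint, card_map]
  refine disjoint_left.2 fun s hs hs' => ?_
  simp only [mem_filter, mem_boardSq_colTrunc, mem_map] at hs hs'
  obtain ⟨b, -, rfl⟩ := hs'
  exact lt_irrefl _ hs.1.1

lemma forall_not_attacks_col_iff {T : Fin n} {C : Finset (Fin n × Fin n)}
    (hC : ∀ r ∈ C, (r.2 : ℕ) < T) (b : Fin n) :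
    (∀ r ∈ C, ¬(r.2 = T ∧ b < r.1) ∧ ¬(r.1 = b ∧ r.2 < T)) ↔ ∀ r ∈ C, r.1 ≠ b :=
  forall₂_congr fun r hr => by
    have hrT : r.2 < T := Fin.lt_def.2 (hC r hr)
    simp [hrT, hrT.ne]

lemma rookInv_colTrunc_succ {T : Fin n} {C : Finset (Fin n × Fin n)}
    (hC : ∀ r ∈ C, (r.2 : ℕ) < T) :
    rookInv n (colTrunc c (T + 1)) C = rookInv n (colTrunc c T) C + #(freeRows (c T) C) := by
  rw [rookInv, card_filter_boardSq_colTrunc_succ, ← rookInv]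
  congr 2
  ext b
  have hbC : (b, T) ∉ C := fun h => lt_irrefl _ (hC _ h)
  simp only [mem_filter, mem_univ, true_and, mem_freeRows, hbC, not_false_eq_true,
    forall_not_attacks_col_iff hC]

lemma rookInv_colTrunc_succ_insert {T : Fin n} {C : Finset (Fin n × Fin n)}
    (hC : ∀ r ∈ C, (r.2 : ℕ) < T) (a : Fin n) :
    rookInv n (colTrunc c (T + 1)) (insert (a, T) C) =
      rookInv n (colTrunc c T) C + #{b ∈ freeRows (c T) C | a < b} := by
  have hT : (a, T) ∉ C := fun h => lt_irrefl _ (hC _ h)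
  rw [rookInv, card_filter_boardSq_colTrunc_succ, rookInv]
  congr 1
  · refine congrArg card (filter_congr fun s hs => ?_)
    have hsT : (s.2 : ℕ) < T := (mem_boardSq_colTrunc.1 hs).1
    have h1 : s ≠ (a, T) := fun h => by simp [h] at hsT
    have h2 : T ≠ s.2 := fun h => by simp [h] at hsT
    have h3 : s.2 ≤ T := Fin.le_iff_val_le_val.2 hsT.le
    simp [h1, h2, h3]
  · congr 1
    ext b
    have hbC : (b, T) ∉ C := fun h => lt_irrefl _ (hC _ h)
    have hab : a < b ↔ b ≠ a ∧ ¬b < a := by rw [not_lt, lt_iff_le_and_ne, ne_comm, and_comm]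
    simp only [mem_filter, mem_univ, true_and, mem_freeRows, mem_insert, forall_eq_or_imp,
      Prod.mk.injEq, and_true, hbC, or_false, lt_irrefl, and_false, not_false_eq_true,
      forall_not_attacks_col_iff hC, hab]
    tauto

lemma insert_mem_placements_colTrunc_succ {T : Fin n} {m : ℕ} {C : Finset (Fin n × Fin n)}
    (hC : C ∈ placements n (colTrunc c T) m) {a : Fin n} (ha : a ∈ freeRows (c T) C) :
    insert (a, T) C ∈ placements n (colTrunc c (T + 1)) (m + 1) := by
  obtain ⟨hcard, hsub, hna⟩ := mem_placements.1 hC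
  have hcol := fun r (hr : r ∈ C) => col_lt_of_mem_placements_colTrunc hC hr
  obtain ⟨haT, hfree⟩ := mem_freeRows.1 ha
  refine mem_placements.2 ⟨?_, insert_subset ?_ fun r hr => ?_, hna.insert fun r hr => ?_⟩
  · rw [card_insert_of_notMem fun h => lt_irrefl _ (hcol _ h), hcard]
  · exact mem_boardSq_colTrunc.2 ⟨Nat.lt_succ_self _, haT⟩
  · exact mem_boardSq_colTrunc.2 ⟨(hcol r hr).trans (Nat.lt_succ_self _),
      (mem_boardSq_colTrunc.1 (hsub hr)).2⟩
  · exact ⟨(hfree r hr).symm, fun h => (hcol r hr).ne (by rw [← h])⟩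

lemma erase_mem_placements_colTrunc {T : Fin n} {m : ℕ} {C : Finset (Fin n × Fin n)}
    (hC : C ∈ placements n (colTrunc c (T + 1)) (m + 1)) {r : Fin n × Fin n} (hr : r ∈ C)
    (hrT : r.2 = T) :
    C.erase r ∈ placements n (colTrunc c T) m ∧ r.1 ∈ freeRows (c T) (C.erase r) := by
  obtain ⟨hcard, hsub, hna⟩ := mem_placements.1 hC
  have hother : ∀ r' ∈ C.erase r, r.1 ≠ r'.1 ∧ r.2 ≠ r'.2 := fun r' hr' =>
    hna r hr r' (mem_of_mem_erase hr') (ne_of_mem_erase hr').symm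
  refine ⟨mem_placements.2 ⟨?_, fun r' hr' => ?_, hna.mono (erase_subset r C)⟩,
    mem_freeRows.2 ⟨?_, fun r' hr' => (hother r' hr').1.symm⟩⟩
  · rw [card_erase_of_mem hr, hcard, Nat.add_sub_cancel]
  · obtain ⟨hcol, hrow⟩ := mem_boardSq_colTrunc.1 (hsub (mem_of_mem_erase hr'))
    have : (r'.2 : ℕ) ≠ T := fun h => (hother r' hr').2 (by rw [hrT]; exact Fin.ext h.symm)
    exact mem_boardSq_colTrunc.2 ⟨by omega, hrow⟩
  · simpa [hrT] using (mem_boardSq_colTrunc.1 (hsub hr)).2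

lemma insert_col_injective {T a b : Fin n} {C D : Finset (Fin n × Fin n)}
    (hC : ∀ r ∈ C, (r.2 : ℕ) < T) (hD : ∀ r ∈ D, (r.2 : ℕ) < T)
    (h : insert (a, T) C = insert (b, T) D) : a = b ∧ C = D := by
  have hleft : ∀ {a} {C : Finset (Fin n × Fin n)}, (∀ r ∈ C, (r.2 : ℕ) < T) →
      {r ∈ insert (a, T) C | (r.2 : ℕ) < T} = C := fun hC => by
    rw [filter_insert, if_neg (lt_irrefl _), filter_true_of_mem hC]
  refine ⟨?_, by rw [← hleft hC, h, hleft hD]⟩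
  have : (a, T) ∈ insert (b, T) D := h ▸ mem_insert_self _ _
  rcases mem_insert.1 this with h' | h'
  · exact (Prod.mk.inj h').1
  · exact absurd (hD _ h') (lt_irrefl _)

lemma sum_placements_colTrunc_succ_of_rook_in_col (hc : Monotone c) (hcn : ∀ j, c j ≤ n)
    (T : Fin n) (m : ℕ) :
    ∑ C ∈ placements n (colTrunc c (T + 1)) (m + 1) with ∃ r ∈ C, r.2 = T,
        q ^ rookInv n (colTrunc c (T + 1)) C =
      qint q (c T - m) * qRook q n (colTrunc c T) m := by
  have hcol := fun C (hC : C ∈ placements n (colTrunc c T) m) r (hr : r ∈ C) =>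
    col_lt_of_mem_placements_colTrunc hC hr
  calc _ = ∑ x ∈ (placements n (colTrunc c T) m).sigma (freeRows (c T)),
        q ^ rookInv n (colTrunc c (T + 1)) (insert (x.2, T) x.1) := by
        refine (sum_bij (fun x _ => insert (x.2, T) x.1) (fun x hx => ?_)
          (fun x hx y hy h => ?_) (fun C hC => ?_) fun _ _ => rfl).symm
        · rw [mem_sigma] at hx
          exact mem_filter.2 ⟨insert_mem_placements_colTrunc_succ hx.1 hx.2,
            _, mem_insert_self _ _, rfl⟩
        · obtain ⟨hab, hCD⟩ := insert_col_injective (hcol _ (mem_sigma.1 hx).1)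
            (hcol _ (mem_sigma.1 hy).1) h
          exact Sigma.ext hCD (heq_of_eq hab)
        · obtain ⟨hC, r, hr, rfl⟩ := mem_filter.1 hC
          exact ⟨⟨C.erase r, r.1⟩, mem_sigma.2 (erase_mem_placements_colTrunc hC hr rfl),
            insert_erase hr⟩
    _ = ∑ C ∈ placements n (colTrunc c T) m, ∑ a ∈ freeRows (c T) C,
          q ^ rookInv n (colTrunc c T) C * q ^ #{b ∈ freeRows (c T) C | a < b} := by
        rw [sum_sigma]
        refine sum_congr rfl fun C hC => sum_congr rfl fun a _ => ?_
        rw [rookInv_colTrunc_succ_insert (hcol C hC), pow_add]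
    _ = _ := by
        rw [qRook, mul_sum]
        refine sum_congr rfl fun C hC => ?_
        rw [← mul_sum, sum_pow_card_filter_lt, card_freeRows hc hcn hC, mul_comm]

lemma filter_placements_colTrunc_succ_not_rook_in_col (T : Fin n) (m : ℕ) :
    {C ∈ placements n (colTrunc c (T + 1)) m | ¬∃ r ∈ C, r.2 = T} =
      placements n (colTrunc c T) m := by
  ext C
  simp only [mem_filter, mem_placements, not_exists, not_and]
  refine ⟨fun ⟨⟨hcard, hsub, hna⟩, hno⟩ => ⟨hcard, fun r hr => ?_, hna⟩,
    fun ⟨hcard, hsub, hna⟩ => ⟨⟨hcard, fun r hr => ?_, hna⟩, fun r hr hrT => ?_⟩⟩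
  · obtain ⟨hcol, hrow⟩ := mem_boardSq_colTrunc.1 (hsub hr)
    have : (r.2 : ℕ) ≠ T := fun h => hno r hr (Fin.ext h)
    exact mem_boardSq_colTrunc.2 ⟨by omega, hrow⟩
  · obtain ⟨hcol, hrow⟩ := mem_boardSq_colTrunc.1 (hsub hr)
    exact mem_boardSq_colTrunc.2 ⟨by omega, hrow⟩
  · have := (mem_boardSq_colTrunc.1 (hsub hr)).1
    rw [hrT] at this
    exact lt_irrefl _ this

lemma qRook_colTrunc_succ (hc : Monotone c) (hcn : ∀ j, c j ≤ n) (T : Fin n) (m : ℕ) :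
    qRook q n (colTrunc c (T + 1)) m =
      q ^ (c T - m) * qRook q n (colTrunc c T) m +
        ∑ C ∈ placements n (colTrunc c (T + 1)) m with ∃ r ∈ C, r.2 = T,
          q ^ rookInv n (colTrunc c (T + 1)) C := by
  rw [qRook, ← sum_filter_not_add_sum_filter _ (fun C => ∃ r ∈ C, r.2 = T),
    filter_placements_colTrunc_succ_not_rook_in_col, qRook, mul_sum]
  congr 1
  refine sum_congr rfl fun C hC => ?_
  rw [rookInv_colTrunc_succ fun r hr => col_lt_of_mem_placements_colTrunc hC hr,
    card_freeRows hc hcn hC, pow_add, mul_comm]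

lemma qRook_colTrunc_succ_zero (hc : Monotone c) (hcn : ∀ j, c j ≤ n) (T : Fin n) :
    qRook q n (colTrunc c (T + 1)) 0 = q ^ c T * qRook q n (colTrunc c T) 0 := by
  rw [qRook_colTrunc_succ q hc hcn, placements_zero, Nat.sub_zero, filter_singleton,
    if_neg (by simp), sum_empty, add_zero]

lemma qRook_colTrunc_succ_succ (hc : Monotone c) (hcn : ∀ j, c j ≤ n) (T : Fin n) (m : ℕ) :
    qRook q n (colTrunc c (T + 1)) (m + 1) =
      q ^ (c T - (m + 1)) * qRook q n (colTrunc c T) (m + 1) +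
        qint q (c T - m) * qRook q n (colTrunc c T) m := by
  rw [qRook_colTrunc_succ q hc hcn, sum_placements_colTrunc_succ_of_rook_in_col q hc hcn]

lemma sum_qRook_colTrunc_succ_mul_qDescFactorial (hc : Monotone c) (hcn : ∀ j, c j ≤ n)
    (T : Fin n) (k : ℕ) :
    ∑ m ∈ range (n + 1), qRook q n (colTrunc c (T + 1)) m * qDescFactorial q k (T + 1 - m) =
      qint q (k + c T - T) *
        ∑ m ∈ range (n + 1), qRook q n (colTrunc c T) m * qDescFactorial q k (T - m) := by
  set R := qRook q n (colTrunc c T)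
  set f := qDescFactorial q k
  have hshift : ∑ m ∈ range n, q ^ (c T - (m + 1)) * R (m + 1) * f (T + 1 - (m + 1)) +
      q ^ c T * R 0 * f (T + 1 - 0) =
        ∑ m ∈ range (n + 1), q ^ (c T - m) * R m * f (T + 1 - m) :=
    (sum_range_succ' (fun m => q ^ (c T - m) * R m * f (T + 1 - m)) n).symm
  have hlast : ∑ m ∈ range n, qint q (c T - m) * R m * f (T + 1 - (m + 1)) =
      ∑ m ∈ range (n + 1), qint q (c T - m) * R m * f (T - m) := by
    rw [sum_range_succ, show R n = 0 from qRook_colTrunc_eq_zero_of_lt q T.2]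
    simp
  rw [sum_range_succ', qRook_colTrunc_succ_zero q hc hcn]
  simp only [qRook_colTrunc_succ_succ q hc hcn, add_mul, sum_add_distrib]
  rw [add_right_comm, hshift, hlast, ← sum_add_distrib, mul_sum]
  refine sum_congr rfl fun m _ => ?_
  by_cases hm : m ≤ T ∧ m ≤ c T
  · rw [mul_left_comm, qint_add_sub_mul_qDescFactorial q hm.1 hm.2]
    ring
  · rcases not_and_or.1 hm with hm | hm
    · simp [R, qRook_colTrunc_eq_zero_of_lt q (not_le.1 hm)]
    · simp [R, qRook_colTrunc_eq_zero_of_height_lt q hc (not_le.1 hm)]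

lemma prod_qint_eq_sum_qRook_colTrunc_mul (hc : Monotone c) (hcn : ∀ j, c j ≤ n) (k : ℕ) :
    ∀ t ≤ n, ∏ i ∈ univ.filter (fun i : Fin n => (i : ℕ) < t), qint q (k + c i - i) =
      ∑ m ∈ range (n + 1), qRook q n (colTrunc c t) m * qDescFactorial q k (t - m) := by
  intro t ht
  induction t with
  | zero =>
    have hempty : boardSq n (colTrunc c 0) = ∅ := by
      ext s
      simp [mem_boardSq_colTrunc]
    rw [sum_range_succ', qRook_zero, hempty]
    simp [qRook_colTrunc_eq_zero_of_lt q (Nat.succ_pos _)]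
  | succ t ih =>
    let T : Fin n := ⟨t, ht⟩
    have hfilter : univ.filter (fun i : Fin n => (i : ℕ) < t + 1) =
        insert T (univ.filter fun i : Fin n => (i : ℕ) < t) := by
      ext i
      simp only [mem_filter, mem_univ, true_and, mem_insert, T, Fin.ext_iff]
      omega
    rw [hfilter, prod_insert (by simp [T]), ih (by omega)]
    exact (sum_qRook_colTrunc_succ_mul_qDescFactorial q hc hcn T k).symm

/-- With `0`-based columns `i`, `[k + c i - i]_q` is the paper's `[k + c_i - i + 1]_q`; the
truncated subtraction of `ℕ` gives the convention `[m]_q = 0` for `m ≤ 0`. -/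
lemma prod_qint_eq_sum_qRook_mul_qDescFactorial (hc : Monotone c) (hcn : ∀ j, c j ≤ n)
    (k : ℕ) :
    ∏ i : Fin n, qint q (k + c i - i) =
      ∑ j ∈ range (n + 1), qRook q n c (n - j) * qDescFactorial q k j := by
  have h := prod_qint_eq_sum_qRook_colTrunc_mul q hc hcn k n le_rfl
  rw [colTrunc_of_le le_rfl, filter_true_of_mem fun i _ => i.2] at h
  rw [h, ← sum_range_reflect]
  refine sum_congr rfl fun j hj => ?_
  rw [Nat.add_sub_cancel, Nat.sub_sub_self (Nat.lt_succ_iff.1 (mem_range.1 hj))]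

lemma mk_prod_qint_mul_prod_one_sub (hc : Monotone c) (hcn : ∀ j, c j ≤ n) :
    PowerSeries.mk (fun k => ∏ i : Fin n, qint q (k + c i - i)) *
        ∏ i ∈ range (n + 1), (1 - PowerSeries.C (q ^ i) * PowerSeries.X) =
      ∑ k ∈ range (n + 1), PowerSeries.C (qHit q n c (n - k)) * PowerSeries.X ^ k := by
  have hmk : PowerSeries.mk (fun k => ∏ i : Fin n, qint q (k + c i - i)) =
      ∑ j ∈ range (n + 1), PowerSeries.C (qRook q n c (n - j)) *
        PowerSeries.mk (qDescFactorial q · j) := by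
    ext k
    simp [prod_qint_eq_sum_qRook_mul_qDescFactorial q hc hcn, map_sum]
  rw [hmk, sum_mul, sum_C_qHit_mul_X_pow]
  refine sum_congr rfl fun j hj => ?_
  rw [← prod_range_mul_prod_Ico _ (mem_range.1 hj), Ico_add_one_right_eq_Icc, ← mul_assoc,
    mul_assoc (PowerSeries.C _), mk_qDescFactorial_mul_prod, map_mul]
  ring

end Rooks

lemma qbrkPos_natCast_sub (q : ℚ) (a b : ℕ) : qbrkPos q ((a : ℤ) - b) = qint q (a - b) := by
  unfold qbrkPos qint
  split_ifs with h
  · congr 2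
    omega
  · rw [Nat.sub_eq_zero_of_le (by omega), sum_range_zero]

end QHit

theorem statement18 (q : ℚ) (n : ℕ) (c : Fin n → ℕ) (hc : IsFerrers n c) :
    (∑ k ∈ Finset.range (n + 1),
        PowerSeries.C (qHit q n c (n - k)) * (PowerSeries.X : PowerSeries ℚ) ^ k) *
        (∏ i ∈ Finset.range (n + 1),
          (1 - PowerSeries.C (q ^ i) * (PowerSeries.X : PowerSeries ℚ)))⁻¹ =
      PowerSeries.mk fun k => ∏ i : Fin n, qbrkPos q ((k : ℤ) + c i - i) := by
  have hbrk : ∀ (k : ℕ) (i : Fin n), qbrkPos q ((k : ℤ) + c i - i) = qint q (k + c i - i) :=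
    fun k i => by rw [← QHit.qbrkPos_natCast_sub]; push_cast; rfl
  simp_rw [hbrk]
  rw [← QHit.mk_prod_qint_mul_prod_one_sub q hc.1 hc.2, mul_assoc, PowerSeries.mul_inv_cancel,
    mul_one]
  simp [map_prod]
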